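/- Fix p ∈ (0, 1/2), α ∈ (0, 1), and δ > 0. There exists k₀ such that for every integer k ≥ k₀, every u with 1 ≤ u ≤ k, every n, every (u, t)-update-efficient injective encoding φ : F₂ᵏ → F₂ⁿ with t ≤ (1−α)·log₂(Σ_{i=0}^{u} C(k, i)) / log₂((1−p)/p), and every decoder ψ : F₂ⁿ → F₂ᵏ, the average error probability 2^{−k}·Σ_{x ∈ F₂ᵏ} Pr(ψ(φ(x) + e) ≠ x) over BSC(p) is at least 1 − δ. -/

import Mathlib

/-!
Fix a message `x` and let `d` range over the Hamming ball `B` of radius `u`. Update-efficiency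
puts `φ (x + d)` within distance `t` of `φ x`, so on BSC(p) every received word is at most
`((1 - p) / p) ^ t` times likelier under `x + d` than under `x`. The decoding regions of the
messages `x + d` are disjoint, hence their success probabilities sum to at most
`((1 - p) / p) ^ t`. Averaging over `x`, the mean success probability is at most
`((1 - p) / p) ^ t / |B| ≤ |B| ^ (-α) ≤ k ^ (-α)` by the bound on `t`, which tends to `0`.
-/

/-- Probability that BSC(p) produces the noise vector `e` (i.i.d. coordinates). -/
noncomputable def bscProb (p : ℝ) {n : ℕ} (e : Fin n → ZMod 2) : ℝ :=
  p ^ hammingNorm e * (1 - p) ^ (n - hammingNorm e)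

open Finset Real Filter

theorem card_hammingNorm_eq (k i : ℕ) :
    #{e : Fin k → ZMod 2 | hammingNorm e = i} = k.choose i := by
  have hone : ∀ a : ZMod 2, a ≠ 0 ↔ a = 1 := by decide
  rw [← (by simp : #(powersetCard i (univ : Finset (Fin k))) = k.choose i)]
  refine card_nbij' (fun e => ({j | e j ≠ 0} : Finset (Fin k)))
    (fun s j => if j ∈ s then 1 else 0) ?_ ?_ ?_ ?_
  · intro e he
    simpa [hammingNorm] using he
  · intro s hs
    simp only [mem_coe, mem_powersetCard] at hs
    simp [hammingNorm, hs.2]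
  · intro e _
    funext j
    by_cases h : e j = 0 <;> simp [h, (hone _).1]
  · intro s _
    ext j
    by_cases h : j ∈ s <;> simp [h]

theorem sum_hammingNorm_comp {M : Type*} [AddCommMonoid M] (k : ℕ) (f : ℕ → M) :
    ∑ e : Fin k → ZMod 2, f (hammingNorm e) = ∑ i ∈ range (k + 1), k.choose i • f i := by
  rw [← sum_fiberwise_of_maps_to (t := range (k + 1)) (g := hammingNorm)]
  · refine sum_congr rfl fun i _ => ?_
    rw [sum_congr rfl fun e he => by rw [(mem_filter.1 he).2], sum_const, card_hammingNorm_eq]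
  · intro e _
    simpa [Nat.lt_succ_iff] using hammingNorm_le_card_fintype (x := e)

theorem sum_bscProb (p : ℝ) (n : ℕ) : ∑ e : Fin n → ZMod 2, bscProb p e = 1 := by
  simp only [bscProb]
  rw [sum_hammingNorm_comp n (fun i => p ^ i * (1 - p) ^ (n - i))]
  simp only [nsmul_eq_mul]
  calc _ = (p + (1 - p)) ^ n := by rw [add_pow]; exact sum_congr rfl fun i _ => by ring
    _ = 1 := by simp

theorem card_hammingBall (k u : ℕ) :
    #{e : Fin k → ZMod 2 | hammingNorm e ≤ u} = ∑ i ∈ range (u + 1), k.choose i := by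
  rw [card_eq_sum_card_fiberwise (f := hammingNorm) (t := range (u + 1))]
  · refine sum_congr rfl fun i hi => ?_
    rw [filter_filter, ← card_hammingNorm_eq k i]
    congr 1
    refine filter_congr fun e _ => ?_
    have := mem_range.1 hi
    exact ⟨And.right, fun h => ⟨by omega, h⟩⟩
  · intro e he
    simpa [Nat.lt_succ_iff] using he

theorem bscProb_nonneg {p : ℝ} (hp0 : 0 ≤ p) (hp1 : p ≤ 1) {n : ℕ} (e : Fin n → ZMod 2) :
    0 ≤ bscProb p e :=
  mul_nonneg (pow_nonneg hp0 _) (pow_nonneg (sub_nonneg.2 hp1) _)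

theorem sum_bscProb_sub (p : ℝ) {n : ℕ} (c : Fin n → ZMod 2) :
    ∑ y, bscProb p (y - c) = 1 :=
  ((Equiv.subRight c).sum_comp (bscProb p)).trans (sum_bscProb p n)

theorem bscProb_eq_mul_pow {p : ℝ} (hp : p ≠ 1) {n : ℕ} (e : Fin n → ZMod 2) :
    bscProb p e = (1 - p) ^ n * (p / (1 - p)) ^ hammingNorm e := by
  have hq : 1 - p ≠ 0 := sub_ne_zero.2 hp.symm
  rw [bscProb, pow_sub₀ _ hq (by simpa using hammingNorm_le_card_fintype (x := e)), div_pow]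
  field_simp

theorem bscProb_le_pow_mul_bscProb {p : ℝ} (hp0 : 0 < p) (hp1 : p ≤ 1 / 2) {n t : ℕ}
    {a b : Fin n → ZMod 2} (hab : hammingDist a b ≤ t) :
    bscProb p a ≤ ((1 - p) / p) ^ t * bscProb p b := by
  have hq : 0 < 1 - p := by linarith
  set s := p / (1 - p)
  have hs0 : 0 < s := div_pos hp0 hq
  have hs1 : s ≤ 1 := (div_le_one hq).2 (by linarith)
  have hnorm : hammingNorm b ≤ hammingNorm a + t := by
    have := hammingDist_triangle 0 a b
    rw [hammingDist_zero_left] at this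
    omega
  rw [bscProb_eq_mul_pow (by linarith), bscProb_eq_mul_pow (by linarith),
    show (1 - p) / p = s⁻¹ by rw [inv_div]]
  calc (1 - p) ^ n * s ^ hammingNorm a
      = s⁻¹ ^ t * ((1 - p) ^ n * s ^ (hammingNorm a + t)) := by
        rw [pow_add, inv_pow]; field_simp
    _ ≤ s⁻¹ ^ t * ((1 - p) ^ n * s ^ hammingNorm b) := by
        gcongr _ * (_ * ?_)
        exact pow_le_pow_of_le_one hs0.le hs1 hnorm

section Decoding

variable {G : Type*} [DecidableEq G] {n : ℕ}

noncomputable def successProb (p : ℝ) (φ : G → Fin n → ZMod 2) (ψ : (Fin n → ZMod 2) → G)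
    (x : G) : ℝ :=
  ∑ e, bscProb p e * if ψ (φ x + e) = x then 1 else 0

theorem sum_bscProb_mul_ite_ne (p : ℝ) (φ : G → Fin n → ZMod 2) (ψ : (Fin n → ZMod 2) → G)
    (x : G) :
    ∑ e, bscProb p e * (if ψ (φ x + e) ≠ x then 1 else 0) = 1 - successProb p φ ψ x := by
  rw [successProb, eq_sub_iff_add_eq, ← sum_add_distrib]
  refine (sum_congr rfl fun e _ => ?_).trans (sum_bscProb p n)
  split_ifs <;> simp_all

theorem sum_sum_bscProb_mul_ite_ne [Fintype G] (p : ℝ) (φ : G → Fin n → ZMod 2)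
    (ψ : (Fin n → ZMod 2) → G) :
    ∑ x, ∑ e, bscProb p e * (if ψ (φ x + e) ≠ x then 1 else 0)
      = Fintype.card G - ∑ x, successProb p φ ψ x := by
  simp only [sum_bscProb_mul_ite_ne, sum_sub_distrib, sum_const, card_univ, nsmul_eq_mul, mul_one]

theorem successProb_eq_sum_sub (p : ℝ) (φ : G → Fin n → ZMod 2) (ψ : (Fin n → ZMod 2) → G)
    (x : G) :
    successProb p φ ψ x = ∑ y, bscProb p (y - φ x) * if ψ y = x then 1 else 0 := by
  unfold successProb
  exact Fintype.sum_equiv (Equiv.addLeft (φ x)) _ _ fun e => by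
    rw [Equiv.coe_addLeft, add_sub_cancel_left]

variable [AddCommGroup G]

theorem sum_successProb_add_le {p : ℝ} (hp0 : 0 < p) (hp1 : p ≤ 1 / 2)
    {φ : G → Fin n → ZMod 2} (ψ : (Fin n → ZMod 2) → G) {B : Finset G} {t : ℕ}
    (hφ : ∀ x, ∀ d ∈ B, hammingDist (φ x) (φ (x + d)) ≤ t) (x : G) :
    ∑ d ∈ B, successProb p φ ψ (x + d) ≤ ((1 - p) / p) ^ t := by
  have hpt : 0 ≤ ((1 - p) / p) ^ t := by
    have : 0 < 1 - p := by linarith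
    positivity
  have hy : ∀ y, ∑ d ∈ B, bscProb p (y - φ (x + d)) * (if ψ y = x + d then 1 else 0)
      ≤ ((1 - p) / p) ^ t * bscProb p (y - φ x) := by
    intro y
    -- the decoding regions of the messages `x + d` are disjoint: only `d = ψ y - x` contributes
    simp_rw [mul_ite, mul_one, mul_zero, ← sub_eq_iff_eq_add', sum_ite_eq]
    split_ifs with hB
    · refine bscProb_le_pow_mul_bscProb hp0 hp1 ?_
      rw [hammingDist_eq_hammingNorm, neg_add_eq_sub, sub_sub_sub_cancel_left, ← neg_add_eq_sub,
        ← hammingDist_eq_hammingNorm]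
      exact hφ x _ hB
    · exact mul_nonneg hpt (bscProb_nonneg hp0.le (by linarith) _)
  calc ∑ d ∈ B, successProb p φ ψ (x + d)
      = ∑ y, ∑ d ∈ B, bscProb p (y - φ (x + d)) * (if ψ y = x + d then 1 else 0) := by
        simp_rw [successProb_eq_sum_sub]
        exact sum_comm
    _ ≤ ∑ y, ((1 - p) / p) ^ t * bscProb p (y - φ x) := sum_le_sum fun y _ => hy y
    _ = ((1 - p) / p) ^ t := by rw [← mul_sum, sum_bscProb_sub, mul_one]

theorem card_mul_sum_successProb_le [Fintype G] {p : ℝ} (hp0 : 0 < p) (hp1 : p ≤ 1 / 2)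
    {φ : G → Fin n → ZMod 2} (ψ : (Fin n → ZMod 2) → G) {B : Finset G} {t : ℕ}
    (hφ : ∀ x, ∀ d ∈ B, hammingDist (φ x) (φ (x + d)) ≤ t) :
    #B * ∑ x, successProb p φ ψ x ≤ Fintype.card G * ((1 - p) / p) ^ t :=
  calc #B * ∑ x, successProb p φ ψ x
      = ∑ x, ∑ d ∈ B, successProb p φ ψ (x + d) := by
        rw [sum_comm, ← nsmul_eq_mul, ← sum_const]
        exact sum_congr rfl fun d _ => (Equiv.sum_comp (Equiv.addRight d) _).symm
    _ ≤ ∑ _x : G, ((1 - p) / p) ^ t := sum_le_sum fun x _ => sum_successProb_add_le hp0 hp1 ψ hφ x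
    _ = Fintype.card G * ((1 - p) / p) ^ t := by rw [sum_const, card_univ, nsmul_eq_mul]

end Decoding

theorem add_one_le_sum_range_choose (k : ℕ) {u : ℕ} (hu : 1 ≤ u) :
    k + 1 ≤ ∑ i ∈ range (u + 1), k.choose i :=
  calc k + 1 = ∑ i ∈ range 2, k.choose i := by simp [sum_range_succ, add_comm]
    _ ≤ _ := sum_le_sum_of_subset (range_subset_range.2 (by omega))

theorem Real.rpow_le_rpow_of_le_mul_logb_div_logb {b r V c t : ℝ} (hb : 1 < b) (hr : 1 < r)
    (hV : 0 < V) (ht : t ≤ c * logb b V / logb b r) : r ^ t ≤ V ^ c := by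
  rw [← logb_le_logb hb (rpow_pos_of_pos (by linarith) t) (rpow_pos_of_pos hV c),
    logb_rpow_eq_mul_logb_of_pos (by linarith), logb_rpow_eq_mul_logb_of_pos hV]
  exact (le_div_iff₀ (logb_pos hb hr)).1 ht

def IsUpdateEfficient {k n : ℕ} (u t : ℕ) (φ : (Fin k → ZMod 2) → Fin n → ZMod 2) : Prop :=
  ∀ x e : Fin k → ZMod 2, hammingNorm e ≤ u → hammingNorm (φ (x + e) - φ x) ≤ t

theorem IsUpdateEfficient.sum_choose_mul_sum_successProb_le {p : ℝ} (hp0 : 0 < p)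
    (hp1 : p ≤ 1 / 2) {k n u t : ℕ} {φ : (Fin k → ZMod 2) → Fin n → ZMod 2}
    (hφ : IsUpdateEfficient u t φ) (ψ : (Fin n → ZMod 2) → Fin k → ZMod 2) :
    (∑ i ∈ range (u + 1), (k.choose i : ℝ)) * ∑ x, successProb p φ ψ x
      ≤ 2 ^ k * ((1 - p) / p) ^ t := by
  have h := card_mul_sum_successProb_le hp0 hp1 ψ (B := {e | hammingNorm e ≤ u}) (t := t)
    fun x d hd => by
      rw [hammingDist_eq_hammingNorm, neg_add_eq_sub]
      exact hφ x d (mem_filter.1 hd).2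
  simpa [card_hammingBall] using h

theorem IsUpdateEfficient.sum_successProb_le {p α : ℝ} (hp0 : 0 < p) (hp1 : p < 1 / 2)
    (hα : 0 ≤ α) {k n u t : ℕ} (hk : 0 < k) (hu : 1 ≤ u) {φ : (Fin k → ZMod 2) → Fin n → ZMod 2}
    (hφ : IsUpdateEfficient u t φ) (ψ : (Fin n → ZMod 2) → Fin k → ZMod 2)
    (ht : (t : ℝ) ≤ (1 - α) * logb 2 (∑ i ∈ range (u + 1), (k.choose i : ℝ)) /
      logb 2 ((1 - p) / p)) :
    ∑ x, successProb p φ ψ x ≤ 2 ^ k * (k : ℝ) ^ (-α) := by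
  set V := ∑ i ∈ range (u + 1), (k.choose i : ℝ)
  have hk' : (0 : ℝ) < k := Nat.cast_pos.2 hk
  have hkV : (k : ℝ) ≤ V := by
    unfold V
    exact_mod_cast (Nat.le_succ k).trans (add_one_le_sum_range_choose k hu)
  have hV : 0 < V := hk'.trans_le hkV
  have hrt : ((1 - p) / p) ^ t ≤ V ^ (-α) * V := by
    rw [← rpow_natCast, ← rpow_add_one hV.ne', neg_add_eq_sub]
    exact rpow_le_rpow_of_le_mul_logb_div_logb one_lt_two
      ((one_lt_div hp0).2 (by linarith)) hV ht
  calc ∑ x, successProb p φ ψ x ≤ 2 ^ k * V ^ (-α) := by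
        refine le_of_mul_le_mul_left ?_ hV
        calc V * ∑ x, successProb p φ ψ x ≤ 2 ^ k * ((1 - p) / p) ^ t :=
              hφ.sum_choose_mul_sum_successProb_le hp0 hp1.le ψ
          _ ≤ 2 ^ k * (V ^ (-α) * V) := by gcongr
          _ = V * (2 ^ k * V ^ (-α)) := by ring
    _ ≤ 2 ^ k * (k : ℝ) ^ (-α) := by
        gcongr ?_ * ?_
        exact rpow_le_rpow_of_nonpos hk' hkV (neg_nonpos.2 hα)

theorem stmt_19_general (p α δ : ℝ) (hp0 : 0 < p) (hp1 : p < 1 / 2) (hα0 : 0 < α) (hδ : 0 < δ) :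
    ∃ k₀ : ℕ, ∀ k : ℕ, k₀ ≤ k → ∀ u : ℕ, 1 ≤ u → u ≤ k → ∀ n t : ℕ,
      ∀ φ : (Fin k → ZMod 2) → (Fin n → ZMod 2), Function.Injective φ →
      (∀ x e : Fin k → ZMod 2, hammingNorm e ≤ u → hammingNorm (φ (x + e) - φ x) ≤ t) →
      (t : ℝ) ≤ (1 - α) *
          Real.logb 2 (∑ i ∈ Finset.range (u + 1), (k.choose i : ℝ)) /
          Real.logb 2 ((1 - p) / p) →
      ∀ ψ : (Fin n → ZMod 2) → (Fin k → ZMod 2),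
        1 - δ ≤ (2 : ℝ) ^ (-(k : ℝ)) * ∑ x : Fin k → ZMod 2, ∑ e : Fin n → ZMod 2,
          bscProb p e * (if ψ (φ x + e) ≠ x then 1 else 0) := by
  obtain ⟨k₀, hk₀⟩ := eventually_atTop.1 <|
    ((tendsto_rpow_neg_atTop hα0).comp tendsto_natCast_atTop_atTop).eventually (ge_mem_nhds hδ)
  refine ⟨k₀, fun k hkk₀ u hu huk n t φ _ hφ ht ψ => ?_⟩
  have hS : ∑ x, successProb p φ ψ x ≤ 2 ^ k * δ :=
    (IsUpdateEfficient.sum_successProb_le hp0 hp1 hα0.le (by omega) hu hφ ψ ht).trans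
      (by gcongr; exact hk₀ k hkk₀)
  have h2k : (2 : ℝ) ^ (-(k : ℝ)) * 2 ^ k = 1 := by
    rw [rpow_neg zero_le_two, rpow_natCast, inv_mul_cancel₀ (by positivity)]
  rw [sum_sum_bscProb_mul_ite_ne]
  simp only [Fintype.card_fun, ZMod.card, Fintype.card_fin, Nat.cast_pow, Nat.cast_ofNat]
  calc 1 - δ = 2 ^ (-(k : ℝ)) * (2 ^ k - 2 ^ k * δ) := by rw [mul_sub, ← mul_assoc, h2k]; ring
    _ ≤ _ := by gcongr

/-- fix `p ∈ (0,1/2)`, `α ∈ (0,1)`, `δ > 0`.  For all large enough `k`, any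
`(u,t)`-update-efficient injective encoding `φ : F₂ᵏ → F₂ⁿ` (`1 ≤ u ≤ k`) with
`t ≤ (1−α) log₂(Σ_{i=0}^{u} C(k,i)) / log₂((1−p)/p)` has average error probability at
least `1 − δ` over BSC(p), for every decoder. -/
theorem stmt_19 (p α δ : ℝ) (hp0 : 0 < p) (hp1 : p < 1 / 2) (hα0 : 0 < α) (hα1 : α < 1)
    (hδ : 0 < δ) :
    ∃ k₀ : ℕ, ∀ k : ℕ, k₀ ≤ k → ∀ u : ℕ, 1 ≤ u → u ≤ k → ∀ n t : ℕ,
      ∀ φ : (Fin k → ZMod 2) → (Fin n → ZMod 2), Function.Injective φ →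
      (∀ x e : Fin k → ZMod 2, hammingNorm e ≤ u → hammingNorm (φ (x + e) - φ x) ≤ t) →
      (t : ℝ) ≤ (1 - α) *
          Real.logb 2 (∑ i ∈ Finset.range (u + 1), (k.choose i : ℝ)) /
          Real.logb 2 ((1 - p) / p) →
      ∀ ψ : (Fin n → ZMod 2) → (Fin k → ZMod 2),
        1 - δ ≤ (2 : ℝ) ^ (-(k : ℝ)) * ∑ x : Fin k → ZMod 2, ∑ e : Fin n → ZMod 2,
          bscProb p e * (if ψ (φ x + e) ≠ x then 1 else 0) :=
  stmt_19_general p α δ hp0 hp1 hα0 hδ
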